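/- Let t₁, t₂ ∈ ℝ, let ρ_{t₁,t₂} = (1/2)(L_{[t₁,t₁+1]} × δ₀ + δ₀ × L_{[t₂,t₂+1]}), and let (λ₁, λ₂) ∈ ℝ² be a zero of the Fourier transform of ρ_{t₁,t₂}, i.e. (ρ_{t₁,t₂})^(λ₁,λ₂) = 0. If |λ₁| ≤ 0.8, then λ₁ = λ₂ or λ₁ + λ₂ = 0. -/

import Mathlib

open MeasureTheory Filter Set
open scoped Real ENNReal

/-- The additive measure of Lebesgue type
`ρ_{t₁,t₂} = (1/2)(L_{[t₁,t₁+1]} × δ₀ + δ₀ × L_{[t₂,t₂+1]})` on `ℝ²`. -/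
noncomputable def rho (t₁ t₂ : ℝ) : Measure (ℝ × ℝ) :=
  (1 / 2 : ℝ≥0∞) • ((volume.restrict (Icc t₁ (t₁ + 1))).prod (Measure.dirac 0)
    + (Measure.dirac (0 : ℝ)).prod (volume.restrict (Icc t₂ (t₂ + 1))))

/-- `Λ` is a spectrum of the measure `ρ` on `ℝ²`: it is countable, the exponentials
`e_λ(x) = e^{2πi λ·x}`, `λ ∈ Λ`, are pairwise orthogonal in `L²(ρ)`, and they are total:
any `f ∈ L²(ρ)` orthogonal to all of them vanishes `ρ`-a.e. -/
def IsSpectrumOf (Λ : Set (ℝ × ℝ)) (ρ : Measure (ℝ × ℝ)) : Prop :=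
  Λ.Countable ∧
  (∀ a ∈ Λ, ∀ b ∈ Λ, a ≠ b →
    ∫ x : ℝ × ℝ,
      Complex.exp ((2 * π * ((a.1 - b.1) * x.1 + (a.2 - b.2) * x.2) : ℝ) * Complex.I) ∂ρ = 0) ∧
  (∀ f : ℝ × ℝ → ℂ, MemLp f 2 ρ →
    (∀ a ∈ Λ,
      ∫ x : ℝ × ℝ,
        f x * Complex.exp ((-2 * π * (a.1 * x.1 + a.2 * x.2) : ℝ) * Complex.I) ∂ρ = 0) →
    ∀ᵐ x ∂ρ, f x = 0)

/-- The Fourier transform of `ρ_{t₁,t₂}`: `ρ̂(ξ) = ∫ e^{-2πi ξ·x} dρ(x)`. -/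
noncomputable def rhoHat (t₁ t₂ : ℝ) (ξ : ℝ × ℝ) : ℂ :=
  ∫ x : ℝ × ℝ,
    Complex.exp ((-2 * π * (ξ.1 * x.1 + ξ.2 * x.2) : ℝ) * Complex.I) ∂(rho t₁ t₂)

/-!
`ρ̂(λ)` is half the sum of the transforms of the two unit segments, and
`∫_t^{t+1} e^{-2πiλx} dx = e^{-2πiλ(t+1/2)} sinc(πλ)`, so a zero of `ρ̂` forces
`|sinc(πλ₁)| = |sinc(πλ₂)|`. By strict concavity of `sin`, `sinc` is strictly decreasing on
`[0, π]`, and beyond `π` it stays below `sinc(4π/5)`. Hence `|πλ₁| ≤ 4π/5` forces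
`|λ₂| = |λ₁|`.
-/

namespace Real

theorem sinc_abs (x : ℝ) : sinc |x| = sinc x := by
  rcases abs_choice x with h | h <;> simp [h]

theorem sinc_strictAntiOn : StrictAntiOn sinc (Icc 0 π) := by
  rintro x ⟨hx₀, -⟩ y ⟨hy₀, hyπ⟩ hxy
  have hy : y ≠ 0 := (hx₀.trans_lt hxy).ne'
  rcases hx₀.eq_or_lt with rfl | hx
  · rw [sinc_zero, sinc_of_ne_zero hy, div_lt_one hxy]
    exact sin_lt hxy
  · have := strictConcaveOn_sin_Icc.secant_strict_mono (a := 0) ⟨le_rfl, pi_pos.le⟩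
      ⟨hx.le, hxy.le.trans hyπ⟩ ⟨hy₀, hyπ⟩ hx.ne' hy hxy
    simpa [sinc_of_ne_zero hx.ne', sinc_of_ne_zero hy] using this

theorem abs_sinc_lt_sinc_four_pi_div_five {y : ℝ} (hy : π ≤ y) :
    |sinc y| < sinc (4 * π / 5) := by
  have hpi₁ := pi_gt_d2
  have hpi₂ := pi_lt_d2
  have hy₀ : 0 < y := pi_pos.trans_le hy
  have hlow : (1 - π ^ 2 / 150) / 4 < sinc (4 * π / 5) := by
    have h := sin_gt_sub_cube (x := π / 5) (by positivity)
    rw [sinc_of_ne_zero (by positivity), show 4 * π / 5 = π - π / 5 by ring, sin_pi_sub,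
      lt_div_iff₀ (by linarith)]
    nlinarith
  refine lt_of_le_of_lt ?_ hlow
  rw [sinc_of_ne_zero hy₀.ne', abs_div, abs_of_pos hy₀, div_le_iff₀ hy₀]
  rcases le_or_gt y (2 * π) with hy2 | hy2
  -- On `[π, 2π]`, `|sin y| = cos (y - 3π/2)` lies below a parabola; against the line
  -- `(1 - π²/150) y / 4` this leaves a quadratic in `y / π` with negative discriminant.
  · have hsin : |sin y| = cos (y - 3 * π / 2) := by
      have h := sin_nonneg_of_nonneg_of_le_pi (x := y - π) (by linarith) (by linarith)
      rw [sin_sub_pi] at h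
      rw [show y - 3 * π / 2 = (y - π) - π / 2 by ring, cos_sub_pi_div_two, sin_sub_pi,
        abs_of_nonpos (by linarith)]
    have hcos := cos_le_one_sub_mul_cos_sq (x := y - 3 * π / 2)
      (by rw [abs_le]; constructor <;> linarith)
    obtain ⟨v, rfl⟩ : ∃ v, y = π * v := ⟨y / π, by field_simp⟩
    have hv : 2 / π ^ 2 * (π * v - 3 * π / 2) ^ 2 = 2 * (v - 3 / 2) ^ 2 := by
      field_simp
    have hv1 : 1 ≤ v := by nlinarith
    have hv2 : v ≤ 2 := by nlinarith
    have hc : 2.93 ≤ π - π ^ 3 / 150 := by nlinarith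
    rw [hv] at hcos
    rw [hsin, show (1 - π ^ 2 / 150) / 4 * (π * v) = (π - π ^ 3 / 150) / 4 * v by ring]
    nlinarith [mul_le_mul_of_nonneg_right hc (by linarith : (0:ℝ) ≤ v), sq_nonneg (v - 1.32)]
  · have hc : 1 / 5 < (1 - π ^ 2 / 150) / 4 := by nlinarith
    nlinarith [abs_sin_le_one y]

theorem eq_of_abs_sinc_eq {x y : ℝ} (hx₀ : 0 ≤ x) (hx : x ≤ 4 * π / 5) (hy₀ : 0 ≤ y)
    (h : |sinc x| = |sinc y|) : x = y := by
  have hxπ : x ≤ π := hx.trans (by linarith [pi_pos])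
  have hx_ge : sinc (4 * π / 5) ≤ sinc x :=
    sinc_strictAntiOn.antitoneOn ⟨hx₀, hxπ⟩ ⟨by positivity, by linarith [pi_pos]⟩ hx
  have hpos : 0 < sinc (4 * π / 5) :=
    (abs_nonneg _).trans_lt (abs_sinc_lt_sinc_four_pi_div_five le_rfl)
  rw [abs_of_pos (hpos.trans_le hx_ge)] at h
  rcases lt_or_ge y π with hyπ | hyπ
  · have hy_pos : 0 < sinc y := by
      simpa [sinc_of_ne_zero pi_ne_zero] using
        sinc_strictAntiOn ⟨hy₀, hyπ.le⟩ ⟨pi_pos.le, le_rfl⟩ hyπ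
    rw [abs_of_pos hy_pos] at h
    exact sinc_strictAntiOn.injOn ⟨hx₀, hxπ⟩ ⟨hy₀, hyπ.le⟩ h
  · linarith [abs_sinc_lt_sinc_four_pi_div_five hyπ]

end Real

theorem integral_Icc_exp_eq_sinc (t l : ℝ) :
    ∫ x in Icc t (t + 1), Complex.exp (↑(-2 * π * l * x) * Complex.I) =
      Complex.exp (↑(-2 * π * l * (t + 1 / 2)) * Complex.I) * Real.sinc (π * l) := by
  rcases eq_or_ne l 0 with rfl | hl
  · simp
  set c : ℂ := ↑(-2 * π * l) * Complex.I
  have hc : c ≠ 0 := by simp [c, hl, Real.pi_ne_zero]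
  rw [integral_Icc_eq_integral_Ioc, ← intervalIntegral.integral_of_le (by linarith)]
  simp_rw [show ∀ x : ℝ, (↑(-2 * π * l * x) * Complex.I : ℂ) = c * x from
    fun x => by push_cast [c]; ring]
  rw [integral_exp_mul_complex hc, Real.sinc_of_ne_zero (by positivity), Complex.ofReal_div,
    Complex.ofReal_sin, Complex.sin]
  have h₁ : Complex.exp (c * ↑(t + 1)) =
      Complex.exp (c * ↑(t + 1 / 2)) * Complex.exp (-(↑(π * l) * Complex.I)) := by
    rw [← Complex.exp_add]; push_cast [c]; ring_nf
  have h₂ : Complex.exp (c * ↑t) =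
      Complex.exp (c * ↑(t + 1 / 2)) * Complex.exp (↑(π * l) * Complex.I) := by
    rw [← Complex.exp_add]; push_cast [c]; ring_nf
  rw [h₁, h₂]
  push_cast [c]
  field_simp
  ring_nf
  rw [Complex.I_sq]
  ring

theorem rhoHat_eq (t₁ t₂ l₁ l₂ : ℝ) :
    rhoHat t₁ t₂ (l₁, l₂) =
      (Complex.exp (↑(-2 * π * l₁ * (t₁ + 1 / 2)) * Complex.I) * Real.sinc (π * l₁) +
        Complex.exp (↑(-2 * π * l₂ * (t₂ + 1 / 2)) * Complex.I) * Real.sinc (π * l₂)) / 2 := by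
  set F : ℝ × ℝ → ℂ := fun x ↦ Complex.exp (↑(-2 * π * (l₁ * x.1 + l₂ * x.2)) * Complex.I)
  have hF : Continuous F := by fun_prop
  have hg₁ : Measurable fun x : ℝ ↦ (x, (0 : ℝ)) := by fun_prop
  have hg₂ : Measurable fun y : ℝ ↦ ((0 : ℝ), y) := by fun_prop
  rw [rhoHat, rho, integral_smul_measure, Measure.prod_dirac, Measure.dirac_prod,
    integral_add_measure
      ((integrable_map_measure hF.aestronglyMeasurable hg₁.aemeasurable).2
        (hF.comp (continuous_id.prodMk continuous_const)).integrableOn_Icc)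
      ((integrable_map_measure hF.aestronglyMeasurable hg₂.aemeasurable).2
        (hF.comp (continuous_const.prodMk continuous_id)).integrableOn_Icc),
    integral_map hg₁.aemeasurable hF.aestronglyMeasurable,
    integral_map hg₂.aemeasurable hF.aestronglyMeasurable,
    ← integral_Icc_exp_eq_sinc, ← integral_Icc_exp_eq_sinc]
  simp only [one_div, ENNReal.toReal_inv, ENNReal.toReal_ofNat, neg_mul, mul_assoc,
    Complex.ofReal_neg, Complex.ofReal_mul, Complex.ofReal_ofNat, Complex.ofReal_add,
    Complex.ofReal_zero, mul_zero, add_zero, zero_add, smul_add, Complex.real_smul,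
    Complex.ofReal_inv, F]
  ring

theorem abs_sinc_eq_of_rhoHat_eq_zero {t₁ t₂ l₁ l₂ : ℝ} (h : rhoHat t₁ t₂ (l₁, l₂) = 0) :
    |Real.sinc (π * l₁)| = |Real.sinc (π * l₂)| := by
  rw [rhoHat_eq, div_eq_zero_iff, add_eq_zero_iff_eq_neg] at h
  simpa only [norm_neg, norm_mul, Complex.norm_exp_ofReal_mul_I, one_mul, Complex.norm_real,
    Real.norm_eq_abs] using congrArg norm (h.resolve_right two_ne_zero)

theorem stmt10 (t₁ t₂ l₁ l₂ : ℝ) (hzero : rhoHat t₁ t₂ (l₁, l₂) = 0)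
    (hsmall : |l₁| ≤ 0.8) :
    l₁ = l₂ ∨ l₁ + l₂ = 0 := by
  have h := abs_sinc_eq_of_rhoHat_eq_zero hzero
  rw [← Real.sinc_abs (π * l₁), ← Real.sinc_abs (π * l₂)] at h
  have habs : |π * l₁| = |π * l₂| := by
    refine Real.eq_of_abs_sinc_eq (abs_nonneg _) ?_ (abs_nonneg _) h
    rw [abs_mul, abs_of_pos Real.pi_pos]
    nlinarith [Real.pi_pos]
  rcases abs_eq_abs.1 habs with h' | h'
  · exact Or.inl (mul_left_cancel₀ Real.pi_ne_zero h')
  · exact Or.inr (mul_left_cancel₀ Real.pi_ne_zero (by linarith : π * (l₁ + l₂) = π * 0))
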